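/- Let H = −A + 2gU + λV on ℓ²(X) with g > 1, λV ≥ 0 a non-negative multiplication operator, A the hard-core adjacency operator and U the cluster-counting operator on configurations of n particles in Λ = [−L,L]∩ℤ. Let Q^{(k)} denote the orthogonal projection onto configurations with at least k clusters. Then Q^{(k)} H Q^{(k)} ≥ 2k(g−1) Q^{(k)} for all 1 ≤ k ≤ n. -/

import Mathlib

open scoped BigOperators

/-- Configurations of `n` hard-core particles in `Λ = [-L, L] ∩ ℤ`. -/
abbrev Config (n : ℕ) (L : ℤ) : Type :=
  {x : Fin n → ℤ // StrictMono x ∧ ∀ i, -L ≤ x i ∧ x i ≤ L}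

/-- The ℓ¹-distance between configurations. -/
noncomputable def ell1 {n : ℕ} {L : ℤ} (x y : Config n L) : ℝ :=
  ∑ i, |((x.1 i - y.1 i : ℤ) : ℝ)|

/-- The number of clusters (maximal blocks of consecutive occupied sites)
of a configuration, counted via its cluster left endpoints. -/
def clusterCount {n : ℕ} {L : ℤ} (x : Config n L) : ℕ :=
  (Finset.univ.filter (fun i : Fin n =>
      ∀ j : Fin n, (j : ℕ) + 1 = (i : ℕ) → x.1 j + 1 < x.1 i)).card

noncomputable def delta {n : ℕ} {L : ℤ} (x : Config n L) :
    lp (fun _ : Config n L => ℂ) 2 :=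
  lp.single 2 x 1

/-!
On `ℓ²` of a finite graph the adjacency operator is bounded by the degree operator, since
`Re (conj (ψ x) * ψ y) ≤ (‖ψ x‖² + ‖ψ y‖²) / 2` on every edge. In the hard-core graph a neighbour
of a configuration arises by moving a single particle one site into an empty site, so that particle
is the right end of a cluster (moving right) or the left end of one (moving left); hence the degree
is at most twice the number of clusters. Therefore `H ≥ 2gU - 2U = 2(g - 1)U`, which is at least
`2k(g - 1)` on configurations with at least `k` clusters.
-/

open scoped ComplexConjugate

section lp

variable {ι : Type*} [Fintype ι]

theorem lp.eq_sum_smul_single [DecidableEq ι] (f : lp (fun _ : ι => ℂ) 2) :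
    f = ∑ i, f i • lp.single 2 i (1 : ℂ) := by
  simp_rw [← lp.single_smul, smul_eq_mul, mul_one]
  exact (lp.hasSum_single ENNReal.ofNat_ne_top f).unique (hasSum_fintype _)

theorem lp.inner_eq_sum_inner_single [DecidableEq ι]
    (T : lp (fun _ : ι => ℂ) 2 →L[ℂ] lp (fun _ : ι => ℂ) 2) (φ ψ : lp (fun _ : ι => ℂ) 2) :
    inner ℂ φ (T ψ) = ∑ x, ∑ y,
      conj (φ x) * ψ y * inner ℂ (lp.single 2 x (1 : ℂ)) (T (lp.single 2 y 1)) := by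
  conv_lhs => rw [lp.eq_sum_smul_single φ, lp.eq_sum_smul_single ψ]
  simp_rw [map_sum, map_smul, sum_inner, inner_sum, inner_smul_left, inner_smul_right, mul_assoc]

theorem lp.norm_sq_eq_sum (f : lp (fun _ : ι => ℂ) 2) : ‖f‖ ^ 2 = ∑ i, ‖f i‖ ^ 2 := by
  simpa [tsum_fintype] using lp.norm_rpow_eq_tsum (p := 2) (by norm_num) f

end lp

namespace SimpleGraph

variable {V : Type*} [Fintype V] (G : SimpleGraph V) [DecidableRel G.Adj]

theorem re_sum_adj_conj_mul_le (ψ : V → ℂ) :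
    (∑ x, ∑ y, if G.Adj x y then conj (ψ x) * ψ y else 0).re ≤
      ∑ x, (G.degree x : ℝ) * ‖ψ x‖ ^ 2 := by
  have hterm : ∀ x y, (conj (ψ x) * ψ y).re ≤ (‖ψ x‖ ^ 2 + ‖ψ y‖ ^ 2) / 2 := fun x y => by
    have := Complex.re_le_norm (conj (ψ x) * ψ y)
    rw [norm_mul, Complex.norm_conj] at this
    nlinarith [sq_nonneg (‖ψ x‖ - ‖ψ y‖)]
  have hdeg : ∀ x, ∑ y, (if G.Adj x y then ‖ψ x‖ ^ 2 else 0) = G.degree x * ‖ψ x‖ ^ 2 := by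
    intro x
    rw [← Finset.sum_filter, Finset.sum_const, ← neighborFinset_eq_filter,
      card_neighborFinset_eq_degree, nsmul_eq_mul]
  have hsymm : ∑ x, ∑ y, (if G.Adj x y then ‖ψ y‖ ^ 2 else 0) =
      ∑ x, ∑ y, (if G.Adj x y then ‖ψ x‖ ^ 2 else 0) := by
    rw [Finset.sum_comm]
    simp_rw [G.adj_comm]
  calc (∑ x, ∑ y, if G.Adj x y then conj (ψ x) * ψ y else 0).re
      ≤ ∑ x, ∑ y, if G.Adj x y then (‖ψ x‖ ^ 2 + ‖ψ y‖ ^ 2) / 2 else 0 := by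
        simp_rw [Complex.re_sum, apply_ite Complex.re, Complex.zero_re]
        gcongr with x _ y _
        split_ifs
        exacts [hterm x y, le_rfl]
    _ = ∑ x, (G.degree x : ℝ) * ‖ψ x‖ ^ 2 := by
        have hsplit : ∀ x y, (if G.Adj x y then (‖ψ x‖ ^ 2 + ‖ψ y‖ ^ 2) / 2 else 0 : ℝ) =
            ((if G.Adj x y then ‖ψ x‖ ^ 2 else 0) + (if G.Adj x y then ‖ψ y‖ ^ 2 else 0)) / 2 :=
          fun x y => by split_ifs <;> ring
        simp_rw [hsplit, ← Finset.sum_div, Finset.sum_add_distrib, hsymm, hdeg]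
        ring

theorem sum_sub_degree_mul_le_re_inner [DecidableEq V] (d : V → ℝ)
    (T : lp (fun _ : V => ℂ) 2 →L[ℂ] lp (fun _ : V => ℂ) 2)
    (hdiag : ∀ x, inner ℂ (lp.single 2 x (1 : ℂ)) (T (lp.single 2 x 1)) = d x)
    (hadj : ∀ x y, G.Adj x y → inner ℂ (lp.single 2 x (1 : ℂ)) (T (lp.single 2 y 1)) = -1)
    (hzero : ∀ x y, x ≠ y → ¬ G.Adj x y →
      inner ℂ (lp.single 2 x (1 : ℂ)) (T (lp.single 2 y 1)) = 0)
    (ψ : lp (fun _ : V => ℂ) 2) :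
    ∑ x, (d x - G.degree x) * ‖ψ x‖ ^ 2 ≤ (inner ℂ ψ (T ψ)).re := by
  have hentry : ∀ x y, inner ℂ (lp.single 2 x (1 : ℂ)) (T (lp.single 2 y 1)) =
      (if x = y then (d x : ℂ) else 0) - if G.Adj x y then 1 else 0 := by
    intro x y
    by_cases hxy : x = y
    · subst hxy
      simp [hdiag]
    · by_cases hG : G.Adj x y
      · simp [hxy, hG, hadj x y hG]
      · simp [hxy, hG, hzero x y hxy hG]
  have hdiagsum : (∑ x, conj (ψ x) * ψ x * (d x : ℂ)).re = ∑ x, d x * ‖ψ x‖ ^ 2 := by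
    simp_rw [Complex.re_sum, Complex.conj_mul', ← Complex.ofReal_pow, ← Complex.ofReal_mul,
      Complex.ofReal_re, mul_comm]
  rw [lp.inner_eq_sum_inner_single]
  simp_rw [hentry, mul_sub, mul_ite, mul_zero, mul_one, Finset.sum_sub_distrib,
    Finset.sum_ite_eq, Finset.mem_univ, if_true, Complex.sub_re, hdiagsum]
  have := G.re_sum_adj_conj_mul_le ψ
  simp_rw [sub_mul, Finset.sum_sub_distrib]
  linarith

end SimpleGraph

theorem Int.exists_eq_one_or_neg_one_of_sum_abs_eq_one {ι : Type*} [Fintype ι] {f : ι → ℤ}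
    (h : ∑ i, |f i| = 1) : ∃ i, (f i = 1 ∨ f i = -1) ∧ ∀ j ≠ i, f j = 0 := by
  classical
  obtain ⟨i, hi⟩ : ∃ i, f i ≠ 0 := by
    by_contra! hf
    simp [hf] at h
  have hsplit := Finset.add_sum_erase Finset.univ (fun j => |f j|) (Finset.mem_univ i)
  have hrest_nonneg : 0 ≤ ∑ j ∈ Finset.univ.erase i, |f j| :=
    Finset.sum_nonneg fun j _ => abs_nonneg _
  have hi_pos : 0 < |f i| := abs_pos.mpr hi
  have hrest : ∑ j ∈ Finset.univ.erase i, |f j| = 0 := by omega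
  refine ⟨i, abs_eq zero_le_one |>.mp (by omega), fun j hj => ?_⟩
  have := (Finset.sum_eq_zero_iff_of_nonneg fun j _ => abs_nonneg (f j)).mp hrest j
    (Finset.mem_erase.mpr ⟨hj, Finset.mem_univ j⟩)
  exact abs_eq_zero.mp this

theorem val_finRotate {n : ℕ} (i : Fin n) : (finRotate n i : ℕ) = (i + 1) % n := by
  obtain ⟨m, rfl⟩ : ∃ m, n = m + 1 := Nat.exists_eq_succ_of_ne_zero i.pos.ne'
  simp [Fin.val_add]

section HardCore

variable {n : ℕ} {L : ℤ}

noncomputable instance : Fintype (Config n L) :=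
  Fintype.ofInjective (fun x i => (⟨x.1 i, x.2.2 i⟩ : Set.Icc (-L) L))
    fun _ _ h => Subtype.ext <| funext fun i => congrArg Subtype.val (congrFun h i)

theorem ell1_comm (x y : Config n L) : ell1 x y = ell1 y x := by
  refine Finset.sum_congr rfl fun i _ => ?_
  push_cast
  rw [abs_sub_comm]

theorem ell1_self (x : Config n L) : ell1 x x = 0 := by
  simp [ell1]

theorem exists_hop_of_ell1_eq_one {x y : Config n L} (h : ell1 x y = 1) :
    ∃ i, (y.1 i = x.1 i + 1 ∨ y.1 i = x.1 i - 1) ∧ ∀ j ≠ i, y.1 j = x.1 j := by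
  have hZ : ∑ i, |y.1 i - x.1 i| = 1 := by
    rw [ell1_comm, ell1] at h
    exact_mod_cast h
  obtain ⟨i, hi, hj⟩ := Int.exists_eq_one_or_neg_one_of_sum_abs_eq_one hZ
  exact ⟨i, by omega, fun j hji => by linarith [hj j hji]⟩

def hopGraph (n : ℕ) (L : ℤ) : SimpleGraph (Config n L) where
  Adj x y := ell1 x y = 1
  symm := ⟨fun x y h => (ell1_comm y x).trans h⟩
  loopless := ⟨fun x h => by simp [ell1_self] at h⟩

noncomputable instance : DecidableRel (hopGraph n L).Adj := fun x y =>
  inferInstanceAs (Decidable (ell1 x y = 1))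

def clusterStarts (x : Config n L) : Finset (Fin n) :=
  Finset.univ.filter fun i => ∀ j : Fin n, (j : ℕ) + 1 = i → x.1 j + 1 < x.1 i

def clusterEnds (x : Config n L) : Finset (Fin n) :=
  Finset.univ.filter fun i => ∀ j : Fin n, (i : ℕ) + 1 = j → x.1 i + 1 < x.1 j

theorem card_clusterStarts (x : Config n L) : (clusterStarts x).card = clusterCount x := rfl

/-- Rotating indices by one sends the right end of each cluster to the left end of the next one,
and the last right end to index `0`. -/
theorem card_clusterEnds_le (x : Config n L) : (clusterEnds x).card ≤ clusterCount x := by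
  refine Finset.card_le_card_of_injOn (finRotate n) (fun i hi => ?_)
    (finRotate n).injective.injOn
  simp only [clusterEnds, Finset.mem_coe, Finset.mem_filter, Finset.mem_univ, true_and] at hi ⊢
  intro j hj
  rw [val_finRotate] at hj
  rcases Nat.lt_or_ge ((i : ℕ) + 1) n with hlt | hge
  · rw [Nat.mod_eq_of_lt hlt] at hj
    obtain rfl : j = i := Fin.ext (by omega)
    exact hi (finRotate n j) (by rw [val_finRotate, Nat.mod_eq_of_lt hlt])
  · rw [show (i : ℕ) + 1 = n by omega, Nat.mod_self] at hj
    omega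

theorem mem_clusterEnds_of_hop_right {x y : Config n L} {i : Fin n}
    (hi : y.1 i = x.1 i + 1) (hj : ∀ j ≠ i, y.1 j = x.1 j) : i ∈ clusterEnds x := by
  simp only [clusterEnds, Finset.mem_filter, Finset.mem_univ, true_and]
  intro j hij
  have hlt : i < j := Fin.lt_def.mpr (by omega)
  have := y.2.1 hlt
  rw [hi, hj j hlt.ne'] at this
  omega

theorem mem_clusterStarts_of_hop_left {x y : Config n L} {i : Fin n}
    (hi : y.1 i = x.1 i - 1) (hj : ∀ j ≠ i, y.1 j = x.1 j) : i ∈ clusterStarts x := by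
  simp only [clusterStarts, Finset.mem_filter, Finset.mem_univ, true_and]
  intro j hji
  have hlt : j < i := Fin.lt_def.mpr (by omega)
  have := y.2.1 hlt
  rw [hi, hj j hlt.ne] at this
  omega

theorem degree_hopGraph_le (x : Config n L) : (hopGraph n L).degree x ≤ 2 * clusterCount x := by
  classical
  have hsub : ((hopGraph n L).neighborFinset x).map (Function.Embedding.subtype _) ⊆
      (clusterEnds x).image (fun i => Function.update x.1 i (x.1 i + 1)) ∪
        (clusterStarts x).image (fun i => Function.update x.1 i (x.1 i - 1)) := by
    intro z hz
    obtain ⟨y, hy, rfl⟩ := Finset.mem_map.mp hz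
    obtain ⟨i, hi | hi, hj⟩ :=
      exists_hop_of_ell1_eq_one ((hopGraph n L).mem_neighborFinset x y |>.mp hy)
    · exact Finset.mem_union_left _ <| Finset.mem_image.mpr
        ⟨i, mem_clusterEnds_of_hop_right hi hj, (Function.eq_update_iff.mpr ⟨hi, hj⟩).symm⟩
    · exact Finset.mem_union_right _ <| Finset.mem_image.mpr
        ⟨i, mem_clusterStarts_of_hop_left hi hj, (Function.eq_update_iff.mpr ⟨hi, hj⟩).symm⟩
  calc (hopGraph n L).degree x
      = (((hopGraph n L).neighborFinset x).map (Function.Embedding.subtype _)).card := by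
        rw [Finset.card_map, SimpleGraph.card_neighborFinset_eq_degree]
    _ ≤ (clusterEnds x).card + (clusterStarts x).card :=
        (Finset.card_le_card hsub).trans <| (Finset.card_union_le _ _).trans <|
          add_le_add Finset.card_image_le Finset.card_image_le
    _ ≤ 2 * clusterCount x := by
        rw [card_clusterStarts]
        linarith [card_clusterEnds_le x]

end HardCore

theorem stmt18_general (n : ℕ) (L : ℤ) (g : ℝ) (hg : 1 < g) (k : ℕ)
    (V : Config n L → ℝ) (hV : ∀ x, 0 ≤ V x)
    (H : lp (fun _ : Config n L => ℂ) 2 →L[ℂ] lp (fun _ : Config n L => ℂ) 2)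
    (hHmat : ∀ x y : Config n L,
      (inner ℂ (delta x) (H (delta y)) : ℂ)
        = if x = y then ((2 * g * (clusterCount x) + V x : ℝ) : ℂ)
          else if ell1 x y = 1 then (-1 : ℂ) else 0)
    (ψ : lp (fun _ : Config n L => ℂ) 2)
    (hψ : ∀ x : Config n L, clusterCount x < k → ψ x = 0) :
    2 * k * (g - 1) * ‖ψ‖ ^ 2 ≤ (inner ℂ ψ (H ψ) : ℂ).re := by
  have hpoint (x : Config n L) : 2 * k * (g - 1) * ‖ψ x‖ ^ 2 ≤
      (2 * g * clusterCount x + V x - (hopGraph n L).degree x) * ‖ψ x‖ ^ 2 := by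
    by_cases hx : ψ x = 0
    · simp [hx]
    have hk : (k : ℝ) ≤ clusterCount x := by exact_mod_cast not_lt.mp (mt (hψ x) hx)
    have hdeg : ((hopGraph n L).degree x : ℝ) ≤ 2 * clusterCount x := by
      exact_mod_cast degree_hopGraph_le x
    gcongr
    nlinarith [hV x]
  calc 2 * k * (g - 1) * ‖ψ‖ ^ 2 = ∑ x, 2 * k * (g - 1) * ‖ψ x‖ ^ 2 := by
        rw [lp.norm_sq_eq_sum, Finset.mul_sum]
    _ ≤ ∑ x, (2 * g * clusterCount x + V x - (hopGraph n L).degree x) * ‖ψ x‖ ^ 2 :=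
        Finset.sum_le_sum fun x _ => hpoint x
    _ ≤ (inner ℂ ψ (H ψ) : ℂ).re :=
        (hopGraph n L).sum_sub_degree_mul_le_re_inner (fun x => 2 * g * clusterCount x + V x) H
          (fun x => (hHmat x x).trans (if_pos rfl))
          (fun x y hxy => (hHmat x y).trans <| (if_neg hxy.ne).trans (if_pos hxy))
          (fun x y hxy hG => (hHmat x y).trans <| (if_neg hxy).trans (if_neg hG)) ψ

theorem stmt18 (n : ℕ) (L : ℤ) (hn : 1 ≤ n) (g : ℝ) (hg : 1 < g)
    (k : ℕ) (hk1 : 1 ≤ k) (hkn : k ≤ n)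
    (V : Config n L → ℝ) (hV : ∀ x, 0 ≤ V x)
    (H : lp (fun _ : Config n L => ℂ) 2 →L[ℂ] lp (fun _ : Config n L => ℂ) 2)
    (hHmat : ∀ x y : Config n L,
      (inner ℂ (delta x) (H (delta y)) : ℂ)
        = if x = y then ((2 * g * (clusterCount x) + V x : ℝ) : ℂ)
          else if ell1 x y = 1 then (-1 : ℂ) else 0)
    (ψ : lp (fun _ : Config n L => ℂ) 2)
    (hψ : ∀ x : Config n L, clusterCount x < k → ψ x = 0) :
    2 * k * (g - 1) * ‖ψ‖ ^ 2 ≤ (inner ℂ ψ (H ψ) : ℂ).re :=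
  stmt18_general n L g hg k V hV H hHmat ψ hψ
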